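/- Let H, a, ρ be Hermitian matrices on ℂ^D with a, ρ positive semidefinite and tr(a) = tr(ρ) = 1. Define η = C (|+⟩⟨+| ⊗ a ⊗ ρ) C† on ℂ² ⊗ ℂ^D ⊗ ℂ^D, where C = |0⟩⟨0| ⊗ 1 ⊗ 1 + |1⟩⟨1| ⊗ S with S the swap operator, and |+⟩ = (|0⟩+|1⟩)/√2. Then 2·tr((σ_y ⊗ H ⊗ 1)·η) = i·tr([H, a]·ρ), where σ_y is the Pauli-Y matrix. -/

import Mathlib

open Matrix Complex
open scoped Kronecker ComplexOrder

/-- The swap operator on `ℂ^D ⊗ ℂ^D`. -/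
def swapMatrix (D : ℕ) : Matrix (Fin D × Fin D) (Fin D × Fin D) ℂ :=
  fun p q => if p.1 = q.2 ∧ p.2 = q.1 then 1 else 0

/-- The Pauli-Y matrix. -/
def pauliY : Matrix (Fin 2) (Fin 2) ℂ := !![0, -I; I, 0]

/-- The projector `|+⟩⟨+|` onto `(|0⟩+|1⟩)/√2`. -/
noncomputable def plusProj : Matrix (Fin 2) (Fin 2) ℂ := (1/2 : ℂ) • !![1, 1; 1, 1]

/-- The controlled-swap operator `C = |0⟩⟨0| ⊗ 1 ⊗ 1 + |1⟩⟨1| ⊗ S`. -/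
def cswap (D : ℕ) : Matrix (Fin 2 × (Fin D × Fin D)) (Fin 2 × (Fin D × Fin D)) ℂ :=
  (Matrix.single 0 0 (1 : ℂ)) ⊗ₖ (1 : Matrix (Fin D × Fin D) (Fin D × Fin D) ℂ)
    + (Matrix.single 1 1 (1 : ℂ)) ⊗ₖ swapMatrix D

/-!
The control qubit only enters through the off-diagonal blocks of `C (|+⟩⟨+| ⊗ a ⊗ ρ) C`, which are
`(a ⊗ ρ) S / 2` and `S (a ⊗ ρ) / 2`; since `σ_y` is off-diagonal, only these survive. The swap
trick `tr((A ⊗ B) S) = tr(A B)` turns them into `tr(H a ρ)` and `tr(a H ρ)`, weighted by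
`σ_y[1,0] = i` and `σ_y[0,1] = -i`.
-/

lemma swapMatrix_conjTranspose (D : ℕ) : (swapMatrix D)ᴴ = swapMatrix D := by
  ext p q
  simp only [conjTranspose_apply, swapMatrix]
  split_ifs <;> simp_all

lemma cswap_conjTranspose (D : ℕ) : (cswap D)ᴴ = cswap D := by
  simp [cswap, conjTranspose_kronecker, swapMatrix_conjTranspose]

section SwapTrick

variable {D : ℕ} (A B C : Matrix (Fin D) (Fin D) ℂ)

lemma trace_kronecker_mul_swapMatrix : ((A ⊗ₖ B) * swapMatrix D).trace = (A * B).trace := by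
  simp [Matrix.trace, mul_apply, swapMatrix, Fintype.sum_prod_type, ite_and]

lemma trace_kronecker_one_mul_kronecker_mul_swapMatrix :
    ((A ⊗ₖ (1 : Matrix (Fin D) (Fin D) ℂ)) * ((B ⊗ₖ C) * swapMatrix D)).trace
      = (A * B * C).trace := by
  rw [← Matrix.mul_assoc, ← mul_kronecker_mul, Matrix.one_mul, trace_kronecker_mul_swapMatrix]

lemma trace_kronecker_one_mul_swapMatrix_mul_kronecker :
    ((A ⊗ₖ (1 : Matrix (Fin D) (Fin D) ℂ)) * (swapMatrix D * (B ⊗ₖ C))).trace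
      = (B * A * C).trace := by
  rw [trace_mul_comm, Matrix.mul_assoc, ← mul_kronecker_mul, Matrix.mul_one, trace_mul_comm,
    trace_kronecker_mul_swapMatrix]

end SwapTrick

lemma trace_mul_single_mul_plusProj_mul_single (A : Matrix (Fin 2) (Fin 2) ℂ) (i j : Fin 2) :
    (A * (single i i 1 * plusProj * single j j 1)).trace = A j i / 2 := by
  rw [single_mul_mul_single, trace_mul_single]
  fin_cases i <;> fin_cases j <;> simp [plusProj, div_eq_mul_inv]

theorem cswap_observable_eq_commutator_general {D : ℕ}
    (H a ρ : Matrix (Fin D) (Fin D) ℂ) :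
    2 * ((pauliY ⊗ₖ (H ⊗ₖ (1 : Matrix (Fin D) (Fin D) ℂ)))
          * (cswap D * (plusProj ⊗ₖ (a ⊗ₖ ρ)) * (cswap D)ᴴ)).trace
      = I * ((H * a - a * H) * ρ).trace := by
  rw [cswap_conjTranspose]
  simp only [cswap, add_mul, mul_add, ← mul_kronecker_mul, trace_add, trace_kronecker,
    trace_mul_single_mul_plusProj_mul_single, Matrix.one_mul, Matrix.mul_one,
    trace_kronecker_one_mul_kronecker_mul_swapMatrix,
    trace_kronecker_one_mul_swapMatrix_mul_kronecker]
  simp only [pauliY, of_apply, cons_val', cons_val_zero, cons_val_one, cons_val_fin_one,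
    zero_div, zero_mul, mul_zero, zero_add, add_zero, sub_mul, trace_sub]
  ring

/-- Measuring `σ_y ⊗ H ⊗ 1` on the controlled-swap state `η` yields the
commutator expectation: `2 tr((σ_y ⊗ H ⊗ 1) η) = i tr([H,a] ρ)`. -/
theorem cswap_observable_eq_commutator {D : ℕ}
    (H a ρ : Matrix (Fin D) (Fin D) ℂ)
    (hH : H.IsHermitian)
    (ha : a.PosSemidef) (hatr : a.trace = 1)
    (hρ : ρ.PosSemidef) (hρtr : ρ.trace = 1) :
    2 * ((pauliY ⊗ₖ (H ⊗ₖ (1 : Matrix (Fin D) (Fin D) ℂ)))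
          * (cswap D * (plusProj ⊗ₖ (a ⊗ₖ ρ)) * (cswap D)ᴴ)).trace
      = I * ((H * a - a * H) * ρ).trace :=
  cswap_observable_eq_commutator_general H a ρ
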